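/- arXiv:2203.14740 — 4 statements merged into one kernel-verified Lean document; each statement's English description precedes it below -/
import Mathlib

section
/- For the Frank–Wolfe iterates x(t_0), x(t_1), …, x(t_T) (with x(t_0) = 0 and the prescribed time steps t_j), every coordinate i ∈ {1,…,n} and every j ∈ {0,1,…,T} satisfy 1 − x_i(t_j) ≥ e^{−t_j/(1+t_j)}. -/
/-- The harmonic number `H j = ∑_{k=1}^j 1/k` (with `H 0 = 0`). -/
noncomputable def harmonicNum (j : ℕ) : ℝ := ∑ k ∈ Finset.range j, (1 : ℝ) / (k + 1)

/-- `H_{2,j} = ∑_{k=1}^j 1/k²`. -/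
noncomputable def harmonicNum2 (j : ℕ) : ℝ := ∑ k ∈ Finset.range j, (1 : ℝ) / ((k : ℝ) + 1) ^ 2

/-- The time values `t_j = 1/(1 - ln(1 + H_j/H_T)) - 1` of the Frank–Wolfe algorithm. -/
noncomputable def fwTime (T j : ℕ) : ℝ :=
  1 / (1 - Real.log (1 + harmonicNum j / harmonicNum T)) - 1

/-- The Frank–Wolfe step ratio `e^{-1/(1+t_j) + 1/(1+t_{j+1})}`. -/
noncomputable def fwRatio (T j : ℕ) : ℝ :=
  Real.exp (-(1 / (1 + fwTime T j)) + 1 / (1 + fwTime T (j + 1)))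

/-- `√a_{t_j} = e^{t_j/(1+t_j)}`. -/
noncomputable def fwSqa (T j : ℕ) : ℝ := Real.exp (fwTime T j / (1 + fwTime T j))

/-- `F : [0,1]^n → ℝ` is DR-submodular: for all `x ≤ y` in `[0,1]^n`, coordinates `i` and
`a > 0` with `x + a·e_i, y + a·e_i ∈ [0,1]^n`, one has
`F(x + a·e_i) - F(x) ≥ F(y + a·e_i) - F(y)`. -/
def DRSubmodular {n : ℕ} (F : (Fin n → ℝ) → ℝ) : Prop :=
  ∀ x y : Fin n → ℝ, x ∈ Set.Icc (0 : Fin n → ℝ) 1 → y ∈ Set.Icc (0 : Fin n → ℝ) 1 →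
    x ≤ y → ∀ i : Fin n, ∀ a : ℝ, 0 < a →
      x + a • (Pi.single i 1 : Fin n → ℝ) ∈ Set.Icc (0 : Fin n → ℝ) 1 →
      y + a • (Pi.single i 1 : Fin n → ℝ) ∈ Set.Icc (0 : Fin n → ℝ) 1 →
      F (y + a • (Pi.single i 1 : Fin n → ℝ)) - F y ≤
        F (x + a • (Pi.single i 1 : Fin n → ℝ)) - F x

/-- The continuous linear map `y ↦ ⟨g, y⟩ = ∑ i, g i * y i` on `ℝⁿ`. -/
noncomputable def gradCLM {n : ℕ} (g : Fin n → ℝ) : (Fin n → ℝ) →L[ℝ] ℝ :=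
  ∑ i, g i • (ContinuousLinearMap.proj i : (Fin n → ℝ) →L[ℝ] ℝ)

/-- `gradF` is the gradient of `F` on the box `[0,1]^n`: at each point of the box, `F` is
differentiable within the box with derivative `y ↦ ⟨gradF z, y⟩`. -/
def HasGradientOnBox {n : ℕ} (F : (Fin n → ℝ) → ℝ) (gradF : (Fin n → ℝ) → Fin n → ℝ) : Prop :=
  ∀ z ∈ Set.Icc (0 : Fin n → ℝ) 1, HasFDerivWithinAt F (gradCLM (gradF z)) (Set.Icc 0 1) z

/-!
With `s_j = 1/(1 + t_j) = 1 - ln(1 + H_j/H_T)`, the step ratio is `r_j = e^{s_{j+1} - s_j}` and the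
claimed bound is `e^{s_j - 1}`. Since `s` decreases, `r_j ∈ (0, 1]`, so
`1 - x_i(t_{j+1}) = r_j (1 - x_i(t_j)) + (1 - r_j)(1 - v_{j,i}) ≥ r_j (1 - x_i(t_j))`,
and the factors `r_j` telescope to `e^{s_j - s_0} = e^{s_j - 1}`.
-/

open Real

theorem exp_sub_mul_one_sub_le_of_step (s x v : ℕ → ℝ) (T : ℕ)
    (hs : ∀ j < T, s (j + 1) ≤ s j) (hv : ∀ j < T, v j ≤ 1)
    (hstep : ∀ j < T, x (j + 1) =
      exp (s (j + 1) - s j) * x j + (1 - exp (s (j + 1) - s j)) * v j) :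
    ∀ j ≤ T, exp (s j - s 0) * (1 - x 0) ≤ 1 - x j := by
  intro j
  induction j with
  | zero => simp
  | succ j ih =>
    intro hj
    set r := exp (s (j + 1) - s j)
    have hr_le_one : r ≤ 1 := exp_le_one_iff.2 (by linarith [hs j hj])
    have hdecomp : 1 - x (j + 1) = r * (1 - x j) + (1 - r) * (1 - v j) := by
      rw [hstep j hj]; ring
    calc exp (s (j + 1) - s 0) * (1 - x 0)
        = r * (exp (s j - s 0) * (1 - x 0)) := by
          rw [← mul_assoc, ← exp_add]; ring_nf
      _ ≤ r * (1 - x j) := mul_le_mul_of_nonneg_left (ih (by omega)) (exp_pos _).le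
      _ ≤ 1 - x (j + 1) := by
          rw [hdecomp]
          nlinarith [hv j hj]

theorem harmonicNum_nonneg (j : ℕ) : 0 ≤ harmonicNum j :=
  Finset.sum_nonneg fun _ _ => by positivity

theorem harmonicNum_mono : Monotone harmonicNum := fun _ _ hab =>
  Finset.sum_le_sum_of_subset_of_nonneg (Finset.range_subset_range.2 hab)
    fun _ _ _ => by positivity

-- Valid for every `j`: `1 / (1 / c) = c` holds in `ℝ` also at `c = 0`.
theorem one_div_one_add_fwTime (T j : ℕ) :
    1 / (1 + fwTime T j) = 1 - log (1 + harmonicNum j / harmonicNum T) := by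
  rw [fwTime, add_sub_cancel, one_div_one_div]

theorem one_div_one_add_fwTime_zero (T : ℕ) : 1 / (1 + fwTime T 0) = 1 := by
  rw [one_div_one_add_fwTime]
  simp [harmonicNum]

theorem one_div_one_add_fwTime_succ_le (T j : ℕ) :
    1 / (1 + fwTime T (j + 1)) ≤ 1 / (1 + fwTime T j) := by
  simp only [one_div_one_add_fwTime, sub_le_sub_iff_left]
  have hT := harmonicNum_nonneg T
  refine log_le_log ?_ (add_le_add_right ?_ 1)
  · exact add_pos_of_pos_of_nonneg one_pos (div_nonneg (harmonicNum_nonneg j) hT)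
  · exact div_le_div_of_nonneg_right (harmonicNum_mono j.le_succ) hT

theorem one_div_one_add_fwTime_pos {T j : ℕ} (hj : j ≤ T) : 0 < 1 / (1 + fwTime T j) := by
  have hq : harmonicNum j / harmonicNum T ≤ 1 :=
    div_le_one_of_le₀ (harmonicNum_mono hj) (harmonicNum_nonneg T)
  have hpos : 0 < 1 + harmonicNum j / harmonicNum T :=
    add_pos_of_pos_of_nonneg one_pos (div_nonneg (harmonicNum_nonneg j) (harmonicNum_nonneg T))
  rw [one_div_one_add_fwTime, sub_pos, log_lt_iff_lt_exp hpos]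
  linarith [exp_one_gt_d9]

theorem neg_fwTime_div_one_add_fwTime {T j : ℕ} (hj : j ≤ T) :
    -fwTime T j / (1 + fwTime T j) = 1 / (1 + fwTime T j) - 1 := by
  have hne : 1 + fwTime T j ≠ 0 := (one_div_pos.1 (one_div_one_add_fwTime_pos hj)).ne'
  field_simp
  ring

theorem fw_coordinate_upper_bound_general
    (n : ℕ)
    (P : Set (Fin n → ℝ)) (hPsub : P ⊆ Set.Icc 0 1)
    (T : ℕ)
    (x v : ℕ → Fin n → ℝ)
    (hx0 : x 0 = 0)
    (hvP : ∀ j < T, v j ∈ P)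
    (hstep : ∀ j < T, x (j + 1) = fwRatio T j • x j + (1 - fwRatio T j) • v j) :
    ∀ j ≤ T, ∀ i : Fin n,
      1 - x j i ≥ Real.exp (-(fwTime T j) / (1 + fwTime T j)) := by
  intro j hj i
  set s : ℕ → ℝ := fun j => 1 / (1 + fwTime T j)
  have hratio (j : ℕ) : fwRatio T j = exp (s (j + 1) - s j) := by
    rw [fwRatio, neg_add_eq_sub]
  have hbound := exp_sub_mul_one_sub_le_of_step s (fun j => x j i) (fun j => v j i) T
    (fun k _ => one_div_one_add_fwTime_succ_le T k) (fun k hk => (hPsub (hvP k hk)).2 i)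
    (fun k hk => by simp [hstep k hk, hratio]) j hj
  have hs0 : s 0 = 1 := one_div_one_add_fwTime_zero T
  simp only [hs0, hx0, Pi.zero_apply, sub_zero, mul_one] at hbound
  rwa [ge_iff_le, neg_fwTime_div_one_add_fwTime hj]

/-- Lemma 1 of the paper. For the Frank–Wolfe iterates with `x(t_0) = 0`,
every coordinate `i` and every `j ∈ {0,…,T}` satisfy `1 - x_i(t_j) ≥ e^{-t_j/(1+t_j)}`. -/
theorem fw_coordinate_upper_bound
    (n : ℕ) (hn : 1 ≤ n)
    (P : Set (Fin n → ℝ)) (hPsub : P ⊆ Set.Icc 0 1) (hPconv : Convex ℝ P)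
    (h0P : (0 : Fin n → ℝ) ∈ P)
    (T : ℕ) (hT : 1 ≤ T)
    (x v : ℕ → Fin n → ℝ)
    (hx0 : x 0 = 0)
    (hvP : ∀ j < T, v j ∈ P)
    (hstep : ∀ j < T, x (j + 1) = fwRatio T j • x j + (1 - fwRatio T j) • v j) :
    ∀ j ≤ T, ∀ i : Fin n,
      1 - x j i ≥ Real.exp (-(fwTime T j) / (1 + fwTime T j)) :=
  fw_coordinate_upper_bound_general n P hPsub T x v hx0 hvP hstep
end

section
/- Let F : [0,1]^n → ℝ be a nonnegative DR-submodular function. Then for all x, y ∈ [0,1]^n, F(x ∨ y) ≥ (1 − ‖x‖_∞) F(y), where ∨ denotes the coordinatewise maximum and ‖x‖_∞ = max_{i=1,…,n} |x_i|. -/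
open Set Finset

theorem nonpos_of_midpoint_convex_of_bddAbove {ψ : ℝ → ℝ} {C : ℝ}
    (hmid : ∀ a b : ℝ, 0 ≤ a → a ≤ b → b ≤ 1 → ψ ((a + b) / 2) ≤ (ψ a + ψ b) / 2)
    (h0 : ψ 0 = 0) (h1 : ψ 1 = 0) (hC : ∀ t ∈ Icc (0 : ℝ) 1, ψ t ≤ C)
    {t : ℝ} (ht : t ∈ Icc (0 : ℝ) 1) : ψ t ≤ 0 := by
  -- `ψ r ≤ ψ r' / 2` for `r' = 2r` or `2r - 1`, so a positive value would double indefinitely.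
  have hdouble : ∀ r ∈ Icc (0 : ℝ) 1, ∃ r' ∈ Icc (0 : ℝ) 1, 2 * ψ r ≤ ψ r' := by
    rintro r ⟨hr0, hr1⟩
    rcases le_total r (1 / 2) with hr | hr
    · have := hmid 0 (2 * r) le_rfl (by linarith) (by linarith)
      rw [show (0 + 2 * r) / 2 = r by ring, h0] at this
      exact ⟨2 * r, ⟨by linarith, by linarith⟩, by linarith⟩
    · have := hmid (2 * r - 1) 1 (by linarith) (by linarith) le_rfl
      rw [show (2 * r - 1 + 1) / 2 = r by ring, h1] at this
      exact ⟨2 * r - 1, ⟨by linarith, by linarith⟩, by linarith⟩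
  have hpow (k : ℕ) : ∃ r ∈ Icc (0 : ℝ) 1, 2 ^ k * ψ t ≤ ψ r := by
    induction k with
    | zero => exact ⟨t, ht, by simp⟩
    | succ k ih =>
      obtain ⟨r, hr, hkr⟩ := ih
      obtain ⟨r', hr', hrr'⟩ := hdouble r hr
      exact ⟨r', hr', by rw [pow_succ']; linarith⟩
  by_contra! hpos
  obtain ⟨k, hk⟩ := pow_unbounded_of_one_lt (C / ψ t) one_lt_two
  obtain ⟨r, hr, hkr⟩ := hpow k
  have := (div_lt_iff₀ hpos).1 hk
  linarith [hC r hr]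

theorem chord_le_of_midpoint_concave_of_bddBelow {g : ℝ → ℝ} {m : ℝ}
    (hmid : ∀ a b : ℝ, 0 ≤ a → a ≤ b → b ≤ 1 → (g a + g b) / 2 ≤ g ((a + b) / 2))
    (hm : ∀ t ∈ Icc (0 : ℝ) 1, m ≤ g t) {t : ℝ} (ht : t ∈ Icc (0 : ℝ) 1) :
    (1 - t) * g 0 + t * g 1 ≤ g t := by
  have := nonpos_of_midpoint_convex_of_bddAbove (ψ := fun t => (1 - t) * g 0 + t * g 1 - g t)
    (C := |g 0| + |g 1| - m)
    (fun a b ha hab hb => by linarith [hmid a b ha hab hb]) (by simp) (by simp)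
    (fun s ⟨hs0, hs1⟩ => by
      nlinarith [hm s ⟨hs0, hs1⟩, le_abs_self (g 0), le_abs_self (g 1), abs_nonneg (g 0),
        abs_nonneg (g 1)]) ht
  linarith

namespace DRSubmodular

variable {n : ℕ} {F : (Fin n → ℝ) → ℝ}

theorem sub_le_sub_of_single (hF : DRSubmodular F) {x y : Fin n → ℝ} (hx : 0 ≤ x)
    (hxy : x ≤ y) (i : Fin n) {a : ℝ} (ha : 0 ≤ a) (hya : y + Pi.single i a ≤ 1) :
    F (y + Pi.single i a) - F y ≤ F (x + Pi.single i a) - F x := by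
  rcases ha.eq_or_lt with rfl | ha
  · simp
  have hsingle : a • (Pi.single i 1 : Fin n → ℝ) = Pi.single i a := by
    rw [← Pi.single_smul, smul_eq_mul, mul_one]
  have hxa : x + Pi.single i a ≤ y + Pi.single i a := add_le_add_left hxy _
  have hsa : 0 ≤ (Pi.single i a : Fin n → ℝ) := Pi.single_nonneg.2 ha.le
  have := hF x y ⟨hx, hxy.trans (le_add_of_nonneg_right hsa |>.trans hya)⟩
    ⟨hx.trans hxy, le_add_of_nonneg_right hsa |>.trans hya⟩ hxy i a ha
  rw [hsingle] at this
  exact this ⟨add_nonneg hx hsa, hxa.trans hya⟩ ⟨add_nonneg (hx.trans hxy) hsa, hya⟩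

theorem add_sub_le_add_sub (hF : DRSubmodular F) {x y w : Fin n → ℝ} (hx : 0 ≤ x)
    (hxy : x ≤ y) (hw : 0 ≤ w) (hyw : y + w ≤ 1) :
    F (y + w) - F y ≤ F (x + w) - F x := by
  classical
  suffices ∀ s : Finset (Fin n), F (y + ∑ i ∈ s, Pi.single i (w i)) - F y ≤
      F (x + ∑ i ∈ s, Pi.single i (w i)) - F x by
    simpa only [univ_sum_single] using this univ
  have hsingle (i : Fin n) : 0 ≤ (Pi.single i (w i) : Fin n → ℝ) := Pi.single_nonneg.2 (hw i)
  have hpartial_le (s : Finset (Fin n)) : ∑ i ∈ s, Pi.single i (w i) ≤ w :=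
    (sum_le_sum_of_subset_of_nonneg (subset_univ s) fun i _ _ => hsingle i).trans
      (univ_sum_single w).le
  intro s
  induction s using Finset.induction_on with
  | empty => simp
  | insert i s hi ih =>
    have hins := hpartial_le (insert i s)
    rw [sum_insert hi] at hins
    have step := hF.sub_le_sub_of_single (add_nonneg hx (sum_nonneg fun j _ => hsingle j))
      (add_le_add_left hxy (∑ j ∈ s, Pi.single j (w j))) i (hw i)
      (by
        rw [add_assoc, add_comm _ (Pi.single i (w i) : Fin n → ℝ)]
        exact (add_le_add_right hins y).trans hyw)
    rw [sum_insert hi, add_comm (Pi.single i (w i) : Fin n → ℝ), ← add_assoc, ← add_assoc]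
    linarith

theorem midpoint_le_apply_add_smul (hF : DRSubmodular F) {y v : Fin n → ℝ} (hy : 0 ≤ y)
    (hv : 0 ≤ v) (hyv : y + v ≤ 1) {a b : ℝ} (ha : 0 ≤ a) (hab : a ≤ b) (hb : b ≤ 1) :
    (F (y + a • v) + F (y + b • v)) / 2 ≤ F (y + ((a + b) / 2) • v) := by
  have hstep (c : ℝ) : y + c • v + ((b - a) / 2) • v = y + (c + (b - a) / 2) • v := by
    rw [add_assoc, ← add_smul]
  have := hF.add_sub_le_add_sub (add_nonneg hy (smul_nonneg ha hv))
    (add_le_add_right (smul_le_smul_of_nonneg_right (show a ≤ (a + b) / 2 by linarith) hv) y)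
    (smul_nonneg (show 0 ≤ (b - a) / 2 by linarith) hv)
    (by
      rw [hstep, show (a + b) / 2 + (b - a) / 2 = b by ring]
      exact (add_le_add_right (smul_le_of_le_one_left hv hb) y).trans hyv)
  rw [hstep, hstep, show (a + b) / 2 + (b - a) / 2 = b by ring,
    show a + (b - a) / 2 = (a + b) / 2 by ring] at this
  linarith

theorem chord_le_apply_add_smul (hF : DRSubmodular F) {m : ℝ}
    (hm : ∀ z ∈ Icc (0 : Fin n → ℝ) 1, m ≤ F z) {y v : Fin n → ℝ} (hy : 0 ≤ y) (hv : 0 ≤ v)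
    (hyv : y + v ≤ 1) {t : ℝ} (ht : t ∈ Icc (0 : ℝ) 1) :
    (1 - t) * F y + t * F (y + v) ≤ F (y + t • v) := by
  simpa using chord_le_of_midpoint_concave_of_bddBelow (g := fun t => F (y + t • v))
    (fun a b ha hab hb => hF.midpoint_le_apply_add_smul hy hv hyv ha hab hb)
    (fun s hs => hm _ ⟨add_nonneg hy (smul_nonneg hs.1 hv),
      (add_le_add_right (smul_le_of_le_one_left hv hs.2) y).trans hyv⟩) ht

end DRSubmodular

theorem norm_le_one_of_mem_Icc {ι : Type*} [Fintype ι] {x : ι → ℝ}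
    (hx : x ∈ Icc (0 : ι → ℝ) 1) : ‖x‖ ≤ 1 :=
  (pi_norm_le_iff_of_nonneg zero_le_one).2 fun i =>
    abs_le.2 ⟨(neg_nonpos.2 zero_le_one).trans (hx.1 i), hx.2 i⟩

theorem add_inv_norm_smul_sup_sub_le_one {ι : Type*} [Fintype ι] {x y : ι → ℝ}
    (hx : x ∈ Icc (0 : ι → ℝ) 1) (hy : y ∈ Icc (0 : ι → ℝ) 1) : y + ‖x‖⁻¹ • (x ⊔ y - y) ≤ 1 := by
  intro i
  simp only [Pi.add_apply, Pi.smul_apply, Pi.sub_apply, Pi.sup_apply, smul_eq_mul, Pi.one_apply]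
  rcases le_or_gt (x i) (y i) with hxy | hyx
  · simpa [max_eq_right hxy] using hy.2 i
  have hxi : x i ≤ ‖x‖ := (le_abs_self _).trans (norm_le_pi_norm x i)
  have hyi : 0 ≤ y i := hy.1 i
  have hu : 0 < ‖x‖ := by linarith
  rw [max_eq_left hyx.le, ← div_eq_inv_mul, ← le_sub_iff_add_le', div_le_iff₀ hu]
  nlinarith [mul_nonneg hyi (sub_nonneg.2 (norm_le_one_of_mem_Icc hx))]

/-- If `F : [0,1]^n → ℝ` is nonnegative and DR-submodular, then for all
`x, y ∈ [0,1]^n`, `F(x ∨ y) ≥ (1 - ‖x‖_∞) F(y)`.  (On `Fin n → ℝ` the default norm `‖·‖`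
is exactly the sup norm `max_i |x_i|`.) -/
theorem drSubmodular_join_lower_bound
    (n : ℕ) (F : (Fin n → ℝ) → ℝ)
    (hFnonneg : ∀ z ∈ Set.Icc (0 : Fin n → ℝ) 1, 0 ≤ F z)
    (hDR : DRSubmodular F) :
    ∀ x ∈ Set.Icc (0 : Fin n → ℝ) 1, ∀ y ∈ Set.Icc (0 : Fin n → ℝ) 1,
      F (x ⊔ y) ≥ (1 - ‖x‖) * F y := by
  intro x hx y hy
  rcases (norm_nonneg x).eq_or_lt with hu | hu
  · rw [← hu, norm_eq_zero.1 hu.symm, sup_eq_right.2 hy.1, sub_zero, one_mul]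
  set v := ‖x‖⁻¹ • (x ⊔ y - y)
  have hv : 0 ≤ v := smul_nonneg (inv_nonneg.2 hu.le) (sub_nonneg.2 le_sup_right)
  have hyv := add_inv_norm_smul_sup_sub_le_one hx hy
  have hchord := hDR.chord_le_apply_add_smul hFnonneg hy.1 hv hyv
    ⟨hu.le, norm_le_one_of_mem_Icc hx⟩
  rw [smul_smul, mul_inv_cancel₀ hu.ne', one_smul, add_sub_cancel] at hchord
  linarith [mul_nonneg hu.le (hFnonneg _ ⟨add_nonneg hy.1 hv, hyv⟩)]
end

section
/- Let F : [0,1]^n → ℝ be a differentiable DR-submodular function. Then for all x, y ∈ [0,1]^n, ⟨∇F(x), y − x⟩ ≥ F(x ∨ y) + F(x ∧ y) − 2F(x), where ∨ and ∧ denote the coordinatewise maximum and minimum respectively. -/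
/-! DR-submodularity makes each partial derivative `∂ᵢF` antitone. Along the segment from `x` to a
point `w ≥ x` (or `w ≤ x`) the derivative of `t ↦ F (x + t • (w - x))` therefore never exceeds
its value at `t = 0`, whence `F w - F x ≤ ⟨∇F(x), w - x⟩`. Apply this to `w = x ⊔ y` and
`w = x ⊓ y` and add, using `x ⊔ y + x ⊓ y = x + y`. -/

open Set Filter Topology

lemma apply_mem_Icc_zero_one {ι : Type*} {z : ι → ℝ} (hz : z ∈ Icc (0 : ι → ℝ) 1) (i : ι) :
    z i ∈ Icc (0 : ℝ) 1 :=
  ⟨hz.1 i, hz.2 i⟩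

lemma add_smul_single_mem_Icc {n : ℕ} {z : Fin n → ℝ} (hz : z ∈ Icc (0 : Fin n → ℝ) 1)
    {i : Fin n} {a : ℝ} (ha : a ∈ Icc (-z i) (1 - z i)) :
    z + a • (Pi.single i 1 : Fin n → ℝ) ∈ Icc (0 : Fin n → ℝ) 1 := by
  constructor <;> intro j <;> obtain ⟨hz0, hz1⟩ := apply_mem_Icc_zero_one hz j <;>
    rcases eq_or_ne j i with rfl | hj <;> simp [*] <;> linarith [ha.1, ha.2]

lemma gradCLM_apply {n : ℕ} (g v : Fin n → ℝ) : gradCLM g v = ∑ i, g i * v i := by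
  simp [gradCLM]

theorem HasDerivWithinAt.le_of_slope_le {f g : ℝ → ℝ} {f' g' x : ℝ} {s : Set ℝ}
    (hf : HasDerivWithinAt f f' s x) (hg : HasDerivWithinAt g g' s x) [(𝓝[s \ {x}] x).NeBot]
    (h : ∀ a ∈ s \ {x}, slope f x a ≤ slope g x a) : f' ≤ g' :=
  le_of_tendsto_of_tendsto (hasDerivWithinAt_iff_tendsto_slope.1 hf)
    (hasDerivWithinAt_iff_tendsto_slope.1 hg) (eventually_mem_nhdsWithin.mono h)

namespace HasGradientOnBox

variable {n : ℕ} {F : (Fin n → ℝ) → ℝ} {gradF : (Fin n → ℝ) → Fin n → ℝ}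

theorem hasDerivWithinAt_line (hgrad : HasGradientOnBox F gradF) {z v : Fin n → ℝ}
    {s : Set ℝ} (hs : MapsTo (fun t => z + t • v) s (Icc 0 1)) {t : ℝ} (ht : t ∈ s) :
    HasDerivWithinAt (fun t => F (z + t • v)) (∑ i, gradF (z + t • v) i * v i) s t := by
  have hline : HasDerivAt (fun t : ℝ => z + t • v) v t := by
    simpa using ((hasDerivAt_id t).smul_const v).const_add z
  have := (hgrad _ (hs ht)).comp_hasDerivWithinAt t hline.hasDerivWithinAt hs
  simpa [gradCLM_apply, Function.comp_def] using this

theorem hasDerivWithinAt_partial (hgrad : HasGradientOnBox F gradF) {z : Fin n → ℝ}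
    (hz : z ∈ Icc (0 : Fin n → ℝ) 1) (i : Fin n) :
    HasDerivWithinAt (fun a => F (z + a • (Pi.single i 1 : Fin n → ℝ))) (gradF z i)
      (Icc (-z i) (1 - z i)) 0 := by
  simpa [Pi.single_apply] using
    hgrad.hasDerivWithinAt_line (fun a ha => add_smul_single_mem_Icc hz ha)
    (by simpa using apply_mem_Icc_zero_one hz i : (0 : ℝ) ∈ Icc (-z i) (1 - z i))

theorem sub_le_of_segment_deriv_le (hgrad : HasGradientOnBox F gradF) {x w : Fin n → ℝ}
    (hx : x ∈ Icc (0 : Fin n → ℝ) 1) (hw : w ∈ Icc (0 : Fin n → ℝ) 1)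
    (h : ∀ t ∈ Ico (0 : ℝ) 1,
      ∑ i, gradF (x + t • (w - x)) i * (w i - x i) ≤ ∑ i, gradF x i * (w i - x i)) :
    F w - F x ≤ ∑ i, gradF x i * (w i - x i) := by
  set C := ∑ i, gradF x i * (w i - x i)
  have hderiv := fun t (ht : t ∈ Icc (0 : ℝ) 1) => hgrad.hasDerivWithinAt_line
    (fun s hs => (convex_Icc (0 : Fin n → ℝ) 1).add_smul_sub_mem hx hw hs) ht
  have hB (t : ℝ) : HasDerivWithinAt (fun t => F x + C * t) C (Ici t) t := by
    simpa using (((hasDerivAt_id t).const_mul C).const_add (F x)).hasDerivWithinAt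
  have key := image_le_of_deriv_right_le_deriv_boundary
    (fun t ht => (hderiv t ht).continuousWithinAt)
    (fun t ht => (hderiv t (Ico_subset_Icc_self ht)).mono_of_mem_nhdsWithin
      (mem_of_superset (Icc_mem_nhdsGE ht.2) (Icc_subset_Icc_left ht.1)))
    (by simp) (by fun_prop) (fun t _ => hB t) h (right_mem_Icc.2 zero_le_one)
  simp only [one_smul, add_sub_cancel, mul_one] at key
  linarith

end HasGradientOnBox

namespace DRSubmodular

variable {n : ℕ} {F : (Fin n → ℝ) → ℝ}

theorem slope_single_le (hDR : DRSubmodular F) {z z' : Fin n → ℝ}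
    (hz : z ∈ Icc (0 : Fin n → ℝ) 1) (hz' : z' ∈ Icc (0 : Fin n → ℝ) 1) (hle : z ≤ z')
    (i : Fin n) {a : ℝ} (ha : a ∈ Icc (-z i) (1 - z' i) \ {0}) :
    slope (fun a => F (z' + a • (Pi.single i 1 : Fin n → ℝ))) 0 a ≤
      slope (fun a => F (z + a • (Pi.single i 1 : Fin n → ℝ))) 0 a := by
  obtain ⟨⟨ha₀, ha₁⟩, ha⟩ := ha
  have hzi := hle i
  have hmem : z + a • (Pi.single i 1 : Fin n → ℝ) ∈ Icc (0 : Fin n → ℝ) 1 :=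
    add_smul_single_mem_Icc hz ⟨ha₀, by linarith⟩
  have hmem' : z' + a • (Pi.single i 1 : Fin n → ℝ) ∈ Icc (0 : Fin n → ℝ) 1 :=
    add_smul_single_mem_Icc hz' ⟨by linarith, ha₁⟩
  simp only [slope_def_field, zero_smul, add_zero, sub_zero]
  rcases lt_or_gt_of_ne ha with hneg | hpos
  · -- a step of length `-a` from the lower base points `z + a • eᵢ ≤ z' + a • eᵢ`
    have hback (w : Fin n → ℝ) :
        w + a • (Pi.single i 1 : Fin n → ℝ) + (-a) • (Pi.single i 1 : Fin n → ℝ) = w := by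
      rw [neg_smul, add_neg_cancel_right]
    have := hDR _ _ hmem hmem' (add_le_add hle le_rfl) i (-a) (neg_pos.2 hneg)
      (by rwa [hback]) (by rwa [hback])
    rw [hback, hback] at this
    exact div_le_div_of_nonpos_of_le hneg.le (by linarith)
  · exact div_le_div_of_nonneg_right (hDR z z' hz hz' hle i a hpos hmem hmem') hpos.le

theorem partial_antitone (hDR : DRSubmodular F) {gradF : (Fin n → ℝ) → Fin n → ℝ}
    (hgrad : HasGradientOnBox F gradF) {z z' : Fin n → ℝ}
    (hz : z ∈ Icc (0 : Fin n → ℝ) 1) (hz' : z' ∈ Icc (0 : Fin n → ℝ) 1) (hle : z ≤ z')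
    (i : Fin n) (hi : 0 < z i ∨ z' i < 1) : gradF z' i ≤ gradF z i := by
  -- `hi` makes `Icc (-z i) (1 - z' i)` a nondegenerate interval: both partials are limits of
  -- difference quotients taken from the same side.
  have hzi := hle i
  have hz₀ := (apply_mem_Icc_zero_one hz i).1
  have hz'₁ := (apply_mem_Icc_zero_one hz' i).2
  have : (𝓝[Icc (-z i) (1 - z' i) \ {0}] (0 : ℝ)).NeBot := by
    rcases hi with h | h
    · refine (right_nhdsWithin_Ioo_neBot (neg_lt_zero.2 h)).mono (nhdsWithin_mono _ ?_)
      exact fun a ha => ⟨⟨ha.1.le, by linarith [ha.2]⟩, ha.2.ne⟩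
    · refine (left_nhdsWithin_Ioo_neBot (sub_pos.2 h)).mono (nhdsWithin_mono _ ?_)
      exact fun a ha => ⟨⟨by linarith [ha.1], ha.2.le⟩, ha.1.ne'⟩
  have hf := (hgrad.hasDerivWithinAt_partial hz' i).mono
    (Icc_subset_Icc (by linarith) le_rfl : Icc (-z i) (1 - z' i) ⊆ _)
  have hg := (hgrad.hasDerivWithinAt_partial hz i).mono
    (Icc_subset_Icc le_rfl (by linarith) : Icc (-z i) (1 - z' i) ⊆ _)
  exact hf.le_of_slope_le hg fun a ha => hDR.slope_single_le hz hz' hle i ha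

theorem sub_le_of_le (hDR : DRSubmodular F) {gradF : (Fin n → ℝ) → Fin n → ℝ}
    (hgrad : HasGradientOnBox F gradF) {x w : Fin n → ℝ}
    (hx : x ∈ Icc (0 : Fin n → ℝ) 1) (hw : w ∈ Icc (0 : Fin n → ℝ) 1) (hxw : x ≤ w) :
    F w - F x ≤ ∑ i, gradF x i * (w i - x i) := by
  refine hgrad.sub_le_of_segment_deriv_le hx hw fun t ht => Finset.sum_le_sum fun i _ => ?_
  have hz := (convex_Icc (0 : Fin n → ℝ) 1).add_smul_sub_mem hx hw (Ico_subset_Icc_self ht)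
  have hxz : x ≤ x + t • (w - x) := fun j => by
    simpa using mul_nonneg ht.1 (sub_nonneg.2 (hxw j))
  rcases (hxw i).eq_or_lt with h | h
  · simp [h]
  · have hzi : (x + t • (w - x)) i < 1 := by
      simp only [Pi.add_apply, Pi.smul_apply, Pi.sub_apply, smul_eq_mul]
      nlinarith [ht.2, (apply_mem_Icc_zero_one hw i).2]
    exact mul_le_mul_of_nonneg_right (hDR.partial_antitone hgrad hx hz hxz i (Or.inr hzi))
      (sub_nonneg.2 h.le)

theorem sub_le_of_ge (hDR : DRSubmodular F) {gradF : (Fin n → ℝ) → Fin n → ℝ}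
    (hgrad : HasGradientOnBox F gradF) {x w : Fin n → ℝ}
    (hx : x ∈ Icc (0 : Fin n → ℝ) 1) (hw : w ∈ Icc (0 : Fin n → ℝ) 1) (hwx : w ≤ x) :
    F w - F x ≤ ∑ i, gradF x i * (w i - x i) := by
  refine hgrad.sub_le_of_segment_deriv_le hx hw fun t ht => Finset.sum_le_sum fun i _ => ?_
  have hz := (convex_Icc (0 : Fin n → ℝ) 1).add_smul_sub_mem hx hw (Ico_subset_Icc_self ht)
  have hzx : x + t • (w - x) ≤ x := fun j => by
    simpa using mul_nonpos_of_nonneg_of_nonpos ht.1 (sub_nonpos.2 (hwx j))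
  rcases (hwx i).eq_or_lt with h | h
  · simp [h]
  · have hzi : 0 < (x + t • (w - x)) i := by
      simp only [Pi.add_apply, Pi.smul_apply, Pi.sub_apply, smul_eq_mul]
      nlinarith [ht.2, (apply_mem_Icc_zero_one hw i).1]
    exact mul_le_mul_of_nonpos_right (hDR.partial_antitone hgrad hz hx hzx i (Or.inl hzi))
      (sub_nonpos.2 h.le)

end DRSubmodular

/-- If `F : [0,1]^n → ℝ` is differentiable and DR-submodular, then for all
`x, y ∈ [0,1]^n`, `⟨∇F(x), y - x⟩ ≥ F(x ∨ y) + F(x ∧ y) - 2 F(x)`. -/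
theorem drSubmodular_gradient_inequality
    (n : ℕ) (F : (Fin n → ℝ) → ℝ) (gradF : (Fin n → ℝ) → Fin n → ℝ)
    (hgrad : HasGradientOnBox F gradF)
    (hDR : DRSubmodular F) :
    ∀ x ∈ Set.Icc (0 : Fin n → ℝ) 1, ∀ y ∈ Set.Icc (0 : Fin n → ℝ) 1,
      ∑ i, gradF x i * (y i - x i) ≥ F (x ⊔ y) + F (x ⊓ y) - 2 * F x := by
  intro x hx y hy
  have hsup := hDR.sub_le_of_le hgrad hx ⟨hx.1.trans le_sup_left, sup_le hx.2 hy.2⟩ le_sup_left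
  have hinf := hDR.sub_le_of_ge hgrad hx ⟨le_inf hx.1 hy.1, inf_le_left.trans hx.2⟩ inf_le_left
  have hsplit : ∑ i, gradF x i * (y i - x i) =
      ∑ i, gradF x i * ((x ⊔ y) i - x i) + ∑ i, gradF x i * ((x ⊓ y) i - x i) := by
    rw [← Finset.sum_add_distrib]
    refine Finset.sum_congr rfl fun i _ => ?_
    rw [Pi.sup_apply, Pi.inf_apply]
    linear_combination (-gradF x i) * max_add_min (x i) (y i)
  rw [ge_iff_le, hsplit]
  linarith
end

section
/- Let F : [0,1]^n → ℝ be continuously differentiable. Then F is DR-submodular if and only if its gradient is antitone, i.e., for all x, y ∈ [0,1]^n with x ≤ y (componentwise), ∇F(x) ≥ ∇F(y) componentwise. -/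
lemma gradCLM_single {n : ℕ} (g : Fin n → ℝ) (i : Fin n) :
    gradCLM g (Pi.single i 1) = g i := by
  simp only [gradCLM, ContinuousLinearMap.sum_apply, ContinuousLinearMap.smul_apply,
    ContinuousLinearMap.proj_apply, smul_eq_mul]
  rw [Finset.sum_eq_single i]
  · simp
  · intro j _ hj; simp [Pi.single_apply, hj]
  · simp

lemma mem_box_add {n : ℕ} {z : Fin n → ℝ} (hz : z ∈ Set.Icc (0 : Fin n → ℝ) 1)
    (i : Fin n) {t : ℝ} (ht0 : 0 ≤ t) (ht1 : z i + t ≤ 1) :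
    z + t • (Pi.single i 1 : Fin n → ℝ) ∈ Set.Icc (0 : Fin n → ℝ) 1 := by
  constructor <;> intro j <;>
    simp only [Pi.add_apply, Pi.smul_apply, Pi.single_apply, smul_eq_mul, Pi.zero_apply,
      Pi.one_apply]
  · rcases eq_or_ne j i with rfl | hj
    · have := hz.1 j
      simp only [Pi.zero_apply] at this
      simp only [if_pos]
      linarith
    · simpa [hj] using hz.1 j
  · rcases eq_or_ne j i with rfl | hj
    · simpa [mul_one] using ht1
    · simpa [hj] using hz.2 j

/-- Derivative of `F` along the `i`-th coordinate path. -/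
lemma path_hasDeriv {n : ℕ} {F : (Fin n → ℝ) → ℝ} {gradF : (Fin n → ℝ) → Fin n → ℝ}
    (hgrad : HasGradientOnBox F gradF) {z : Fin n → ℝ} (i : Fin n) {s : Set ℝ} {t : ℝ}
    (hmap : Set.MapsTo (fun t : ℝ => z + t • (Pi.single i 1 : Fin n → ℝ)) s
      (Set.Icc (0 : Fin n → ℝ) 1))
    (hmem : z + t • (Pi.single i 1 : Fin n → ℝ) ∈ Set.Icc (0 : Fin n → ℝ) 1) :
    HasDerivWithinAt (fun t : ℝ => F (z + t • (Pi.single i 1 : Fin n → ℝ)))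
      (gradF (z + t • (Pi.single i 1 : Fin n → ℝ)) i) s t := by
  have hφ : HasDerivWithinAt (fun t : ℝ => z + t • (Pi.single i 1 : Fin n → ℝ))
      (Pi.single i 1) s t := by
    have h1 : HasDerivAt (fun t : ℝ => z + t • (Pi.single i 1 : Fin n → ℝ))
        ((Pi.single i 1 : Fin n → ℝ)) t := by
      simpa using ((hasDerivAt_id t).smul_const (Pi.single i 1 : Fin n → ℝ)).const_add z
    exact h1.hasDerivWithinAt
  have := (hgrad _ hmem).comp_hasDerivWithinAt t hφ hmap
  rw [gradCLM_single] at this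
  exact this

/-- If `y i < 1` then the gradient inequality at `x ≤ y` follows from DR-submodularity
by taking forward difference quotients. -/
lemma key_lt {n : ℕ} {F : (Fin n → ℝ) → ℝ} {gradF : (Fin n → ℝ) → Fin n → ℝ}
    (hgrad : HasGradientOnBox F gradF) (hF : DRSubmodular F)
    {x y : Fin n → ℝ} (hx : x ∈ Set.Icc (0 : Fin n → ℝ) 1)
    (hy : y ∈ Set.Icc (0 : Fin n → ℝ) 1) (hxy : x ≤ y) (i : Fin n) (hyi : y i < 1) :
    gradF y i ≤ gradF x i := by
  set e : Fin n → ℝ := Pi.single i 1 with he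
  set δ : ℝ := 1 - y i with hδdef
  have hδ : 0 < δ := by simp [hδdef]; linarith
  have hxi : x i ≤ y i := hxy i
  have hmapx : Set.MapsTo (fun t : ℝ => x + t • e) (Set.Icc 0 δ)
      (Set.Icc (0 : Fin n → ℝ) 1) := fun t ht =>
    mem_box_add hx i ht.1 (by simp only [hδdef] at ht ⊢; linarith [ht.2])
  have hmapy : Set.MapsTo (fun t : ℝ => y + t • e) (Set.Icc 0 δ)
      (Set.Icc (0 : Fin n → ℝ) 1) := fun t ht =>
    mem_box_add hy i ht.1 (by simp only [hδdef] at ht ⊢; linarith [ht.2])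
  have hx0 : x + (0 : ℝ) • e ∈ Set.Icc (0 : Fin n → ℝ) 1 := by simpa using hx
  have hy0 : y + (0 : ℝ) • e ∈ Set.Icc (0 : Fin n → ℝ) 1 := by simpa using hy
  have hdx : HasDerivWithinAt (fun t : ℝ => F (x + t • e)) (gradF x i) (Set.Icc 0 δ) 0 := by
    have := path_hasDeriv hgrad i hmapx hx0
    simpa using this
  have hdy : HasDerivWithinAt (fun t : ℝ => F (y + t • e)) (gradF y i) (Set.Icc 0 δ) 0 := by
    have := path_hasDeriv hgrad i hmapy hy0
    simpa using this
  have hIcc : Set.Icc (0:ℝ) δ \ {0} = Set.Ioc 0 δ := by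
    ext t
    simp only [Set.mem_diff, Set.mem_Icc, Set.mem_singleton_iff, Set.mem_Ioc]
    constructor
    · rintro ⟨⟨h1, h2⟩, h3⟩; exact ⟨lt_of_le_of_ne h1 (Ne.symm h3), h2⟩
    · rintro ⟨h1, h2⟩; exact ⟨⟨h1.le, h2⟩, h1.ne'⟩
  have hne : (nhdsWithin (0:ℝ) (Set.Ioc 0 δ)).NeBot := by
    apply mem_closure_iff_nhdsWithin_neBot.mp
    rw [closure_Ioc hδ.ne]
    exact ⟨le_refl 0, hδ.le⟩
  have htx : Filter.Tendsto (slope (fun t : ℝ => F (x + t • e)) 0)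
      (nhdsWithin 0 (Set.Ioc 0 δ)) (nhds (gradF x i)) := by
    have := hasDerivWithinAt_iff_tendsto_slope.mp hdx
    rwa [hIcc] at this
  have hty : Filter.Tendsto (slope (fun t : ℝ => F (y + t • e)) 0)
      (nhdsWithin 0 (Set.Ioc 0 δ)) (nhds (gradF y i)) := by
    have := hasDerivWithinAt_iff_tendsto_slope.mp hdy
    rwa [hIcc] at this
  refine le_of_tendsto_of_tendsto hty htx ?_
  filter_upwards [self_mem_nhdsWithin] with t ht
  rcases ht with ⟨ht0, htδ⟩
  have hxa : x + t • e ∈ Set.Icc (0 : Fin n → ℝ) 1 := hmapx ⟨ht0.le, htδ⟩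
  have hya : y + t • e ∈ Set.Icc (0 : Fin n → ℝ) 1 := hmapy ⟨ht0.le, htδ⟩
  have hDR := hF x y hx hy hxy i t ht0 hxa hya
  simp only [slope_def_field, sub_zero, zero_smul, add_zero]
  rw [div_le_div_iff₀ ht0 ht0]
  have h := mul_le_mul_of_nonneg_right hDR ht0.le
  nlinarith [h]

/-- A continuously differentiable `F : [0,1]^n → ℝ` is DR-submodular iff its
gradient is antitone: for all `x ≤ y` in `[0,1]^n`, `∇F(x) ≥ ∇F(y)` componentwise. -/
theorem drSubmodular_iff_gradient_antitone
    (n : ℕ) (F : (Fin n → ℝ) → ℝ) (gradF : (Fin n → ℝ) → Fin n → ℝ)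
    (hgrad : HasGradientOnBox F gradF)
    (hgradCont : ContinuousOn gradF (Set.Icc 0 1)) :
    DRSubmodular F ↔
      ∀ x ∈ Set.Icc (0 : Fin n → ℝ) 1, ∀ y ∈ Set.Icc (0 : Fin n → ℝ) 1,
        x ≤ y → ∀ i : Fin n, gradF y i ≤ gradF x i := by
  constructor
  · -- DR-submodular → gradient antitone
    intro hF x hx y hy hxy i
    -- perturb: replace the i-th coordinates by `min (· i) (1 - ε)`
    set xe : ℝ → (Fin n → ℝ) := fun ε => Function.update x i (min (x i) (1 - ε)) with hxe
    set ye : ℝ → (Fin n → ℝ) := fun ε => Function.update y i (min (y i) (1 - ε)) with hye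
    have hbox : ∀ ε ∈ Set.Ioo (0:ℝ) 1, ∀ z : Fin n → ℝ, z ∈ Set.Icc (0 : Fin n → ℝ) 1 →
        Function.update z i (min (z i) (1 - ε)) ∈ Set.Icc (0 : Fin n → ℝ) 1 := by
      intro ε hε z hz
      constructor <;> intro j <;> rcases eq_or_ne j i with rfl | hj
      · have h0 := hz.1 j
        simp only [Pi.zero_apply] at h0 ⊢
        simp only [Function.update_self]
        exact le_min h0 (by linarith [hε.2])
      · simpa [Function.update_of_ne hj] using hz.1 j
      · have h1 := hz.2 j
        simp only [Pi.one_apply] at h1 ⊢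
        simp only [Function.update_self]
        exact min_le_of_left_le h1
      · simpa [Function.update_of_ne hj] using hz.2 j
    have hkey : ∀ ε ∈ Set.Ioo (0:ℝ) 1, gradF (ye ε) i ≤ gradF (xe ε) i := by
      intro ε hε
      refine key_lt hgrad hF (hbox ε hε x hx) (hbox ε hε y hy) ?_ i ?_
      · intro j
        rcases eq_or_ne j i with rfl | hj
        · simp only [hxe, hye, Function.update_self]
          exact min_le_min (hxy j) le_rfl
        · simpa [hxe, hye, Function.update_of_ne hj] using hxy j
      · simp only [hye, Function.update_self]
        exact lt_of_le_of_lt (min_le_right _ _) (by linarith [hε.1])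
    -- take ε → 0⁺
    have hxlim : Filter.Tendsto xe (nhdsWithin 0 (Set.Ioo 0 1)) (nhds x) := by
      rw [tendsto_pi_nhds]
      intro j
      rcases eq_or_ne j i with rfl | hj
      · simp only [hxe, Function.update_self]
        have : Filter.Tendsto (fun ε : ℝ => min (x j) (1 - ε)) (nhds 0)
            (nhds (min (x j) (1 - 0))) :=
          (Filter.Tendsto.min tendsto_const_nhds (tendsto_const_nhds.sub Filter.tendsto_id))
        have h2 := this.mono_left (nhdsWithin_le_nhds (s := Set.Ioo (0:ℝ) 1))
        have hx1 : x j ≤ 1 := by simpa using hx.2 j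
        simpa [min_eq_left hx1] using h2
      · simp [hxe, Function.update_of_ne hj, tendsto_const_nhds]
    have hylim : Filter.Tendsto ye (nhdsWithin 0 (Set.Ioo 0 1)) (nhds y) := by
      rw [tendsto_pi_nhds]
      intro j
      rcases eq_or_ne j i with rfl | hj
      · simp only [hye, Function.update_self]
        have : Filter.Tendsto (fun ε : ℝ => min (y j) (1 - ε)) (nhds 0)
            (nhds (min (y j) (1 - 0))) :=
          (Filter.Tendsto.min tendsto_const_nhds (tendsto_const_nhds.sub Filter.tendsto_id))
        have h2 := this.mono_left (nhdsWithin_le_nhds (s := Set.Ioo (0:ℝ) 1))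
        have hy1 : y j ≤ 1 := by simpa using hy.2 j
        simpa [min_eq_left hy1] using h2
      · simp [hye, Function.update_of_ne hj, tendsto_const_nhds]
    have hne : (nhdsWithin (0:ℝ) (Set.Ioo 0 1)).NeBot := by
      apply mem_closure_iff_nhdsWithin_neBot.mp
      rw [closure_Ioo one_ne_zero.symm]
      exact ⟨le_refl 0, zero_le_one⟩
    have hcx : Filter.Tendsto (fun ε => gradF (xe ε) i) (nhdsWithin 0 (Set.Ioo 0 1))
        (nhds (gradF x i)) := by
      have h1 : Filter.Tendsto xe (nhdsWithin 0 (Set.Ioo 0 1))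
          (nhdsWithin x (Set.Icc 0 1)) := by
        rw [tendsto_nhdsWithin_iff]
        refine ⟨hxlim, ?_⟩
        filter_upwards [self_mem_nhdsWithin] with ε hε
        exact hbox ε hε x hx
      exact ((continuous_apply i).continuousAt.comp_continuousWithinAt
        (hgradCont x hx)).tendsto.comp h1
    have hcy : Filter.Tendsto (fun ε => gradF (ye ε) i) (nhdsWithin 0 (Set.Ioo 0 1))
        (nhds (gradF y i)) := by
      have h1 : Filter.Tendsto ye (nhdsWithin 0 (Set.Ioo 0 1))
          (nhdsWithin y (Set.Icc 0 1)) := by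
        rw [tendsto_nhdsWithin_iff]
        refine ⟨hylim, ?_⟩
        filter_upwards [self_mem_nhdsWithin] with ε hε
        exact hbox ε hε y hy
      exact ((continuous_apply i).continuousAt.comp_continuousWithinAt
        (hgradCont y hy)).tendsto.comp h1
    refine le_of_tendsto_of_tendsto hcy hcx ?_
    filter_upwards [self_mem_nhdsWithin] with ε hε
    exact hkey ε hε
  · -- gradient antitone → DR-submodular
    intro hanti x y hx hy hxy i a ha hxa hya
    set e : Fin n → ℝ := Pi.single i 1 with he
    have hxia : x i + a ≤ 1 := by
      have := hxa.2 i
      simpa [he, Pi.single_apply] using this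
    have hyia : y i + a ≤ 1 := by
      have := hya.2 i
      simpa [he, Pi.single_apply] using this
    have hmapx : Set.MapsTo (fun t : ℝ => x + t • e) (Set.Icc 0 a)
        (Set.Icc (0 : Fin n → ℝ) 1) := fun t ht =>
      mem_box_add hx i ht.1 (by linarith [ht.2])
    have hmapy : Set.MapsTo (fun t : ℝ => y + t • e) (Set.Icc 0 a)
        (Set.Icc (0 : Fin n → ℝ) 1) := fun t ht =>
      mem_box_add hy i ht.1 (by linarith [ht.2])
    set g : ℝ → ℝ := fun t => F (x + t • e) - F (y + t • e) with hg
    have hderiv : ∀ t ∈ Set.Icc (0:ℝ) a,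
        HasDerivWithinAt g (gradF (x + t • e) i - gradF (y + t • e) i) (Set.Icc 0 a) t := by
      intro t ht
      exact (path_hasDeriv hgrad i hmapx (hmapx ht)).sub
        (path_hasDeriv hgrad i hmapy (hmapy ht))
    have hmono : MonotoneOn g (Set.Icc 0 a) := by
      apply monotoneOn_of_hasDerivWithinAt_nonneg (convex_Icc 0 a)
        (fun t ht => (hderiv t ht).continuousWithinAt)
        (f' := fun t => gradF (x + t • e) i - gradF (y + t • e) i)
      · intro t ht
        exact ((hderiv t (interior_subset ht)).mono interior_subset)
      · intro t ht
        rw [interior_Icc] at ht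
        have hxt := hmapx ⟨ht.1.le, ht.2.le⟩
        have hyt := hmapy ⟨ht.1.le, ht.2.le⟩
        have hle : x + t • e ≤ y + t • e := fun j => by
          simp only [Pi.add_apply]
          linarith [hxy j]
        linarith [hanti _ hxt _ hyt hle i]
    have h0 : (0:ℝ) ∈ Set.Icc (0:ℝ) a := ⟨le_refl 0, ha.le⟩
    have hA : a ∈ Set.Icc (0:ℝ) a := ⟨ha.le, le_refl a⟩
    have := hmono h0 hA ha.le
    simp only [hg, zero_smul, add_zero] at this
    linarith
end
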